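/- Let p be a probability distribution on F_2^{2n} and let beta_1,...,beta_t be i.i.d. uniform on F_2^{2n}, inducing a random partition of F_2^{2n} into 2^t buckets C(b) via the symplectic form as above. For each bucket let err(B) = E(B) - E'(B) where E(B) is the total p-mass of B and E'(B) is the largest single value of p in B. Then the expectation over the random subgroup of sum over the s largest-energy buckets of err satisfies E[ sum_{top s buckets} err ] <= sqrt(2s/2^t), and Var[ sum_{top s buckets} err ] <= 2s/2^t. -/
import Mathlib


open Finset
open scoped Classical

/-- `F n` is `𝔽₂^{2n}`. -/
abbrev F (n : ℕ) := (Fin n → ZMod 2) × (Fin n → ZMod 2)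

/-- The symplectic inner product `[x,y] = ⟨x₁,y₂⟩ + ⟨x₂,y₁⟩` over `𝔽₂`. -/
def symp {n : ℕ} (x y : F n) : ZMod 2 :=
  (∑ i, x.1 i * y.2 i) + ∑ i, x.2 i * y.1 i

/-- Total `p`-mass of the bucket `C(b) = {α : [α,β_j] = b_j ∀j}`. -/
noncomputable def bucketE {n t : ℕ} (p : F n → ℝ) (β : Fin t → F n)
    (b : Fin t → ZMod 2) : ℝ :=
  ∑ α ∈ Finset.univ.filter (fun α : F n => ∀ j, symp α (β j) = b j), p α

/-- Largest single value of `p` in the bucket `C(b)`. -/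
noncomputable def bucketMax {n t : ℕ} (p : F n → ℝ) (β : Fin t → F n)
    (b : Fin t → ZMod 2) : ℝ :=
  ⨆ α ∈ Finset.univ.filter (fun α : F n => ∀ j, symp α (β j) = b j), p α

/-- The collision error of a bucket: total mass minus its largest element. -/
noncomputable def bucketErr {n t : ℕ} (p : F n → ℝ) (β : Fin t → F n)
    (b : Fin t → ZMod 2) : ℝ :=
  bucketE p β b - bucketMax p β b

section Aux
variable {n t : ℕ}

lemma zmod2_add_eq_zero : ∀ a b : ZMod 2, a + b = 0 ↔ a = b := by decide
lemma zmod2_ne_zero : ∀ a : ZMod 2, a ≠ 0 → a = 1 := by decide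

lemma symp_sub_left (x y z : F n) : symp (x - y) z = symp x z - symp y z := by
  simp [symp, sub_mul, Finset.sum_sub_distrib]; ring

lemma symp_add_right (x y z : F n) : symp x (y + z) = symp x y + symp x z := by
  simp [symp, mul_add, Finset.sum_add_distrib]; ring

lemma symp_sub_right (x y z : F n) : symp x (y - z) = symp x y - symp x z := by
  simp [symp, mul_sub, Finset.sum_sub_distrib]; ring

lemma symp_exists_one {δ : F n} (hδ : δ ≠ 0) : ∃ y : F n, symp δ y = 1 := by
  by_cases h1 : δ.1 = 0
  · have h2 : δ.2 ≠ 0 := fun h2 => hδ (Prod.ext h1 h2)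
    obtain ⟨i, hi⟩ := Function.ne_iff.mp h2
    refine ⟨(Pi.single i 1, 0), ?_⟩
    simp [symp, Pi.single_apply, mul_ite]
    exact zmod2_ne_zero _ hi
  · obtain ⟨i, hi⟩ := Function.ne_iff.mp h1
    refine ⟨(0, Pi.single i 1), ?_⟩
    simp [symp, Pi.single_apply, mul_ite]
    exact zmod2_ne_zero _ hi

end Aux

section Count
variable {n t : ℕ}

lemma card_symp_zero {δ : F n} (hδ : δ ≠ 0) :
    (Finset.univ.filter fun y : F n => symp δ y = 0).card * 2 = Fintype.card (F n) := by
  obtain ⟨y₀, hy₀⟩ := symp_exists_one hδ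
  have hbij : (Finset.univ.filter fun y : F n => symp δ y = 0).card
      = (Finset.univ.filter fun y : F n => symp δ y = 1).card := by
    apply Finset.card_bij' (fun y _ => y + y₀) (fun y _ => y - y₀)
    · intro y hy
      simp only [Finset.mem_filter, Finset.mem_univ, true_and] at hy ⊢
      rw [symp_add_right, hy, hy₀, zero_add]
    · intro y hy
      simp only [Finset.mem_filter, Finset.mem_univ, true_and] at hy ⊢
      rw [symp_sub_right, hy, hy₀, sub_self]
    · intro y _; exact add_sub_cancel_right y y₀
    · intro y _; exact sub_add_cancel y y₀
  have hsplit := Finset.card_filter_add_card_filter_not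
    (s := (Finset.univ : Finset (F n))) (p := fun y => symp δ y = 0)
  have hneg : (Finset.univ.filter fun y : F n => ¬ symp δ y = 0)
      = (Finset.univ.filter fun y : F n => symp δ y = 1) := by
    apply Finset.filter_congr
    intro y _
    constructor
    · exact fun h => zmod2_ne_zero _ h
    · intro h h0; rw [h0] at h; exact absurd h (by decide)
  rw [hneg, Finset.card_univ] at hsplit
  omega

lemma card_beta (t : ℕ) {δ : F n} (hδ : δ ≠ 0) :
    (Finset.univ.filter fun β : Fin t → F n => ∀ j, symp δ (β j) = 0).card * 2 ^ t
      = Fintype.card (Fin t → F n) := by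
  have hpi : (Finset.univ.filter fun β : Fin t → F n => ∀ j, symp δ (β j) = 0)
      = Fintype.piFinset (fun _ : Fin t => Finset.univ.filter fun y : F n => symp δ y = 0) := by
    ext β; simp [Fintype.mem_piFinset]
  rw [hpi, Fintype.card_piFinset]
  rw [Finset.prod_const, Finset.card_univ, Fintype.card_fin, Fintype.card_fun, Fintype.card_fin,
    ← mul_pow, card_symp_zero hδ]

end Count

section Bucket
variable {n t : ℕ} (p : F n → ℝ) (β : Fin t → F n) (b : Fin t → ZMod 2)

/-- The bucket as a finset. -/
noncomputable def Bk (β : Fin t → F n) (b : Fin t → ZMod 2) : Finset (F n) :=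
  Finset.univ.filter (fun α : F n => ∀ j, symp α (β j) = b j)

lemma bucketE_eq : bucketE p β b = ∑ α ∈ Bk β b, p α := rfl

lemma bucketE_nonneg (hp0 : ∀ x, 0 ≤ p x) : 0 ≤ bucketE p β b := Finset.sum_nonneg fun _ _ => hp0 _

lemma le_bucketE (hp0 : ∀ x, 0 ≤ p x) {α : F n} (hα : α ∈ Bk β b) : p α ≤ bucketE p β b :=
  Finset.single_le_sum (fun x _ => hp0 x) hα

lemma le_bucketMax {α : F n} (hα : α ∈ Bk β b) : p α ≤ bucketMax p β b := by
  have h1 : p α ≤ ⨆ _ : α ∈ Bk β b, p α :=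
    le_ciSup (f := fun _ : α ∈ Bk β b => p α) (Set.Finite.bddAbove (Set.finite_range _)) hα
  refine h1.trans ?_
  exact le_ciSup (f := fun α => ⨆ _ : α ∈ Bk β b, p α)
    (Set.Finite.bddAbove (Set.finite_range _)) α

lemma bucketMax_nonneg (hp0 : ∀ x, 0 ≤ p x) : 0 ≤ bucketMax p β b := by
  by_cases h : (Bk β b).Nonempty
  · obtain ⟨α, hα⟩ := h
    exact le_trans (hp0 α) (le_bucketMax p β b hα)
  · rw [bucketMax]
    apply le_of_eq
    rw [Finset.not_nonempty_iff_eq_empty] at h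
    rw [show Finset.univ.filter (fun α : F n => ∀ j, symp α (β j) = b j) = Bk β b from rfl, h]
    simp [Real.iSup_of_isEmpty]

lemma bucketMax_le (hp0 : ∀ x, 0 ≤ p x) : bucketMax p β b ≤ bucketE p β b := by
  apply Real.iSup_le _ (bucketE_nonneg p β b hp0)
  intro α
  apply Real.iSup_le _ (bucketE_nonneg p β b hp0)
  intro hα
  exact le_bucketE p β b hp0 hα

lemma bucketErr_nonneg (hp0 : ∀ x, 0 ≤ p x) : 0 ≤ bucketErr p β b :=
  sub_nonneg.mpr (bucketMax_le p β b hp0)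

lemma bucketErr_sq_le (hp0 : ∀ x, 0 ≤ p x) :
    bucketErr p β b ^ 2 ≤ ∑ α ∈ Bk β b, p α * ∑ α' ∈ (Bk β b).erase α, p α' := by
  have hsq : ∀ α ∈ Bk β b, p α * p α ≤ bucketMax p β b * p α :=
    fun α hα => mul_le_mul_of_nonneg_right (le_bucketMax p β b hα) (hp0 α)
  have h3 : ∑ α ∈ Bk β b, p α * p α ≤ bucketMax p β b * bucketE p β b := by
    rw [bucketE_eq, Finset.mul_sum]
    exact Finset.sum_le_sum hsq
  have hkey : bucketErr p β b ^ 2 ≤ bucketE p β b ^ 2 - ∑ α ∈ Bk β b, p α * p α := by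
    have h0 : 0 ≤ bucketMax p β b := bucketMax_nonneg p β b hp0
    have h1 : bucketMax p β b ≤ bucketE p β b := bucketMax_le p β b hp0
    rw [bucketErr]
    nlinarith [h3, h0, h1]
  refine hkey.trans (le_of_eq ?_)
  have hE2 : bucketE p β b ^ 2 = ∑ α ∈ Bk β b, p α * bucketE p β b := by
    rw [bucketE_eq, ← Finset.sum_mul, sq]
  rw [hE2, ← Finset.sum_sub_distrib]
  apply Finset.sum_congr rfl
  intro α hα
  rw [← mul_sub, Finset.sum_erase_eq_sub hα, ← bucketE_eq]

end Bucket

section Fiber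
variable {n t : ℕ}

noncomputable def bkt (β : Fin t → F n) (α : F n) : Fin t → ZMod 2 := fun j => symp α (β j)

lemma Bk_eq (β : Fin t → F n) (b : Fin t → ZMod 2) :
    Bk β b = Finset.univ.filter (fun α : F n => bkt β α = b) := by
  apply Finset.filter_congr
  intro α _
  exact (funext_iff).symm

lemma T_le (p : F n → ℝ) (hp0 : ∀ x, 0 ≤ p x) (β : Fin t → F n) :
    ∑ b : Fin t → ZMod 2, bucketErr p β b ^ 2
      ≤ ∑ α : F n, ∑ α' ∈ Finset.univ.erase α,
          (if bkt β α' = bkt β α then p α * p α' else 0) := by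
  calc ∑ b : Fin t → ZMod 2, bucketErr p β b ^ 2
      ≤ ∑ b : Fin t → ZMod 2, ∑ α ∈ Bk β b, p α * ∑ α' ∈ (Bk β b).erase α, p α' :=
        Finset.sum_le_sum fun b _ => bucketErr_sq_le p β b hp0
    _ = ∑ b : Fin t → ZMod 2, ∑ α ∈ Finset.univ.filter (fun α => bkt β α = b),
          p α * ∑ α' ∈ Finset.univ.erase α, (if bkt β α' = bkt β α then p α' else 0) := by
        refine Finset.sum_congr rfl fun b _ => ?_
        rw [Bk_eq]
        refine Finset.sum_congr rfl fun α hα => ?_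
        have hb : bkt β α = b := (Finset.mem_filter.mp hα).2
        congr 1
        rw [← Finset.filter_erase, Finset.sum_filter]
        refine Finset.sum_congr rfl fun α' _ => ?_
        rw [hb]
    _ = ∑ α : F n, p α * ∑ α' ∈ Finset.univ.erase α,
          (if bkt β α' = bkt β α then p α' else 0) :=
        Finset.sum_fiberwise _ _ _
    _ = ∑ α : F n, ∑ α' ∈ Finset.univ.erase α,
          (if bkt β α' = bkt β α then p α * p α' else 0) := by
        refine Finset.sum_congr rfl fun α _ => ?_
        rw [Finset.mul_sum]
        exact Finset.sum_congr rfl fun α' _ => by rw [mul_ite, mul_zero]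

lemma sum_T_le (p : F n → ℝ) (hp0 : ∀ x, 0 ≤ p x) (hp1 : ∑ x, p x = 1) :
    ∑ β : Fin t → F n, ∑ b : Fin t → ZMod 2, bucketErr p β b ^ 2
      ≤ (Fintype.card (Fin t → F n) : ℝ) / 2 ^ t := by
  have hcard : ∀ α' α : F n, α' ≠ α →
      ((Finset.univ.filter fun β : Fin t → F n => bkt β α' = bkt β α).card : ℝ)
        = (Fintype.card (Fin t → F n) : ℝ) / 2 ^ t := by
    intro α' α hne
    have hδ : α' - α ≠ 0 := sub_ne_zero.mpr hne
    have hfe : (Finset.univ.filter fun β : Fin t → F n => bkt β α' = bkt β α)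
        = Finset.univ.filter fun β : Fin t → F n => ∀ j, symp (α' - α) (β j) = 0 := by
      apply Finset.filter_congr
      intro β _
      rw [funext_iff]
      constructor
      · intro h j; rw [symp_sub_left]; exact sub_eq_zero.mpr (h j)
      · intro h j
        have := h j
        rw [symp_sub_left, sub_eq_zero] at this
        exact this
    have hc := card_beta (n := n) t hδ
    rw [hfe]
    have : ((Finset.univ.filter fun β : Fin t → F n =>
        ∀ j, symp (α' - α) (β j) = 0).card : ℝ) * 2 ^ t = (Fintype.card (Fin t → F n) : ℝ) := by
      exact_mod_cast congrArg (Nat.cast : ℕ → ℝ) hc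
    rw [eq_div_iff (by positivity : (2:ℝ) ^ t ≠ 0)]
    exact this
  calc ∑ β : Fin t → F n, ∑ b : Fin t → ZMod 2, bucketErr p β b ^ 2
      ≤ ∑ β : Fin t → F n, ∑ α : F n, ∑ α' ∈ Finset.univ.erase α,
          (if bkt β α' = bkt β α then p α * p α' else 0) :=
        Finset.sum_le_sum fun β _ => T_le p hp0 β
    _ = ∑ α : F n, ∑ α' ∈ Finset.univ.erase α, ∑ β : Fin t → F n,
          (if bkt β α' = bkt β α then p α * p α' else 0) := by
        rw [Finset.sum_comm]
        exact Finset.sum_congr rfl fun α _ => Finset.sum_comm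
    _ = ∑ α : F n, ∑ α' ∈ Finset.univ.erase α,
          ((Fintype.card (Fin t → F n) : ℝ) / 2 ^ t) * (p α * p α') := by
        refine Finset.sum_congr rfl fun α _ => Finset.sum_congr rfl fun α' hα' => ?_
        rw [← Finset.sum_filter, Finset.sum_const, nsmul_eq_mul,
          hcard α' α (Finset.ne_of_mem_erase hα')]
    _ = ((Fintype.card (Fin t → F n) : ℝ) / 2 ^ t) *
          ∑ α : F n, ∑ α' ∈ Finset.univ.erase α, p α * p α' := by
        rw [Finset.mul_sum]
        exact Finset.sum_congr rfl fun α _ => (Finset.mul_sum _ _ _).symm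
    _ ≤ ((Fintype.card (Fin t → F n) : ℝ) / 2 ^ t) * 1 := by
        refine mul_le_mul_of_nonneg_left ?_ (by positivity)
        have : ∑ α : F n, ∑ α' ∈ Finset.univ.erase α, p α * p α'
            ≤ ∑ α : F n, ∑ α' : F n, p α * p α' := by
          refine Finset.sum_le_sum fun α _ => ?_
          refine Finset.sum_le_sum_of_subset_of_nonneg (Finset.subset_univ _) ?_
          intro α' _ _
          exact mul_nonneg (hp0 α) (hp0 α')
        refine this.trans ?_
        have : ∑ α : F n, ∑ α' : F n, p α * p α' = (∑ α : F n, p α) * ∑ α' : F n, p α' := by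
          rw [Finset.sum_mul_sum]
        rw [this, hp1, one_mul]
    _ = (Fintype.card (Fin t → F n) : ℝ) / 2 ^ t := mul_one _

end Fiber


/-- for a probability distribution `p` on `𝔽₂^{2n}` and uniformly random
`β₁,…,β_t`, the total collision error over the `s` largest-energy buckets (a choice
`S β` of `s` buckets of largest energy, for each `β`) has expectation at most
`sqrt(2s/2^t)` and variance at most `2s/2^t`. -/
theorem hashing_error_expectation_variance (n t s : ℕ) (hs : s ≤ 2 ^ t)
    (p : F n → ℝ) (hp0 : ∀ x, 0 ≤ p x) (hp1 : ∑ x, p x = 1)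
    (S : (Fin t → F n) → Finset (Fin t → ZMod 2))
    (hScard : ∀ β, (S β).card = s)
    (hStop : ∀ β, ∀ b ∈ S β, ∀ b' ∉ S β, bucketE p β b' ≤ bucketE p β b) :
    ((1 / (Fintype.card (Fin t → F n) : ℝ)) *
        ∑ β : Fin t → F n, ∑ b ∈ S β, bucketErr p β b
      ≤ Real.sqrt (2 * s / 2 ^ t)) ∧
    ((1 / (Fintype.card (Fin t → F n) : ℝ)) *
        ∑ β : Fin t → F n,
          ((∑ b ∈ S β, bucketErr p β b) -
            (1 / (Fintype.card (Fin t → F n) : ℝ)) *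
              ∑ β' : Fin t → F n, ∑ b ∈ S β', bucketErr p β' b) ^ 2
      ≤ 2 * s / 2 ^ t) := by
  set X : (Fin t → F n) → ℝ := fun β => ∑ b ∈ S β, bucketErr p β b with hXdef
  set N : ℕ := Fintype.card (Fin t → F n) with hNdef
  have hNpos : 0 < N := Fintype.card_pos
  have hNR : (0:ℝ) < N := by exact_mod_cast hNpos
  have hX0 : ∀ β, 0 ≤ X β := fun β => Finset.sum_nonneg fun b _ => bucketErr_nonneg p β b hp0
  have hXsq : ∀ β, X β ^ 2 ≤ (s:ℝ) * ∑ b : Fin t → ZMod 2, bucketErr p β b ^ 2 := by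
    intro β
    calc X β ^ 2 ≤ ((S β).card : ℝ) * ∑ b ∈ S β, bucketErr p β b ^ 2 :=
          sq_sum_le_card_mul_sum_sq
      _ = (s:ℝ) * ∑ b ∈ S β, bucketErr p β b ^ 2 := by rw [hScard β]
      _ ≤ (s:ℝ) * ∑ b : Fin t → ZMod 2, bucketErr p β b ^ 2 := by
          refine mul_le_mul_of_nonneg_left ?_ (Nat.cast_nonneg s)
          exact Finset.sum_le_sum_of_subset_of_nonneg (Finset.subset_univ _)
            (fun _ _ _ => sq_nonneg _)
  have hA : (1/(N:ℝ)) * ∑ β : Fin t → F n, X β ^ 2 ≤ 2 * s / 2 ^ t := by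
    calc (1/(N:ℝ)) * ∑ β : Fin t → F n, X β ^ 2
        ≤ (1/(N:ℝ)) * ∑ β : Fin t → F n, ((s:ℝ) * ∑ b : Fin t → ZMod 2, bucketErr p β b ^ 2) :=
          mul_le_mul_of_nonneg_left (Finset.sum_le_sum fun β _ => hXsq β) (by positivity)
      _ = (s:ℝ) * ((1/(N:ℝ)) * ∑ β : Fin t → F n, ∑ b : Fin t → ZMod 2, bucketErr p β b ^ 2) := by
          rw [← Finset.mul_sum]; ring
      _ ≤ (s:ℝ) * ((1/(N:ℝ)) * ((N:ℝ) / 2 ^ t)) := by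
          refine mul_le_mul_of_nonneg_left ?_ (Nat.cast_nonneg s)
          exact mul_le_mul_of_nonneg_left (sum_T_le p hp0 hp1) (by positivity)
      _ = (s:ℝ) / 2 ^ t := by field_simp
      _ ≤ 2 * s / 2 ^ t := by
          have h0 : (0:ℝ) ≤ s := Nat.cast_nonneg s
          have h2 : (0:ℝ) < 2 ^ t := by positivity
          gcongr
          linarith
  set m : ℝ := (1 / (N:ℝ)) * ∑ β' : Fin t → F n, X β' with hmdef
  have hm0 : 0 ≤ m := by
    apply mul_nonneg (by positivity)
    exact Finset.sum_nonneg fun β _ => hX0 β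
  have hm2 : m ^ 2 ≤ (1/(N:ℝ)) * ∑ β : Fin t → F n, X β ^ 2 := by
    have h := sq_sum_le_card_mul_sum_sq (s := (Finset.univ : Finset (Fin t → F n))) (f := X)
    rw [Finset.card_univ] at h
    have hm2' : m ^ 2 = (1/(N:ℝ))^2 * (∑ β : Fin t → F n, X β)^2 := by rw [hmdef]; ring
    rw [hm2']
    calc (1/(N:ℝ))^2 * (∑ β : Fin t → F n, X β)^2
        ≤ (1/(N:ℝ))^2 * ((N:ℝ) * ∑ β : Fin t → F n, X β ^ 2) :=
          mul_le_mul_of_nonneg_left h (by positivity)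
      _ = (1/(N:ℝ)) * ∑ β : Fin t → F n, X β ^ 2 := by field_simp
  constructor
  · -- expectation bound
    have : m ≤ Real.sqrt (2 * s / 2 ^ t) := by
      have h1 : m = Real.sqrt (m ^ 2) := (Real.sqrt_sq hm0).symm
      rw [h1]
      exact Real.sqrt_le_sqrt (hm2.trans hA)
    exact this
  · -- variance bound
    have hsum : ∑ β : Fin t → F n, X β = (N:ℝ) * m := by
      rw [hmdef]; field_simp
    have hexpand : ∑ β : Fin t → F n, (X β - m) ^ 2
        = (∑ β : Fin t → F n, X β ^ 2) - 2 * m * (∑ β : Fin t → F n, X β) + (N:ℝ) * m ^ 2 := by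
      have : ∀ β : Fin t → F n, (X β - m) ^ 2 = X β ^ 2 - 2 * m * X β + m ^ 2 :=
        fun β => by ring
      rw [Finset.sum_congr rfl fun β _ => this β, Finset.sum_add_distrib,
        Finset.sum_sub_distrib, ← Finset.mul_sum, Finset.sum_const, Finset.card_univ,
        nsmul_eq_mul, ← hNdef]
    have : (1/(N:ℝ)) * ∑ β : Fin t → F n, (X β - m) ^ 2
        = (1/(N:ℝ)) * (∑ β : Fin t → F n, X β ^ 2) - m ^ 2 := by
      rw [hexpand, hsum]
      field_simp
      ring
    rw [this]
    nlinarith [hA, sq_nonneg m]
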